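/- Let A ∈ ℝ^{m×d} and let D ∈ ℝ^{d×n} be a dictionary of full row rank. Then A satisfies the D-null space property of order s if and only if A satisfies the strong D-null space property of order s, i.e., there exists a constant c > 0 such that for every v ∈ ker(A D) and every index set T with |T| ≤ s, there exists u ∈ ker D with ‖v_{T^c}‖₁ − ‖v_T + u‖₁ ≥ c‖D v‖₂. -/

import Mathlib

open scoped BigOperators

section Defs

variable {𝕜 : Type*}

/-- ℓ¹ norm of a finitely-indexed vector. -/
noncomputable def norm1 [RCLike 𝕜] {ι : Type*} [Fintype ι] (x : ι → 𝕜) : ℝ :=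
  ∑ i, ‖x i‖

/-- ℓ² norm of a finitely-indexed vector. -/
noncomputable def norm2 [RCLike 𝕜] {ι : Type*} [Fintype ι] (x : ι → 𝕜) : ℝ :=
  Real.sqrt (∑ i, ‖x i‖ ^ 2)

/-- Restriction of a vector to an index set `T` (zero outside `T`). -/
def restr [Zero 𝕜] {ι : Type*} [DecidableEq ι] (T : Finset ι) (x : ι → 𝕜) : ι → 𝕜 :=
  fun i => if i ∈ T then x i else 0

/-- `x` has at most `s` nonzero entries. -/
def sparse [Zero 𝕜] {ι : Type*} (s : ℕ) (x : ι → 𝕜) : Prop :=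
  {i | x i ≠ 0}.ncard ≤ s

/-- Null space property of order `s`. -/
def NSP [RCLike 𝕜] {m : ℕ} {ι : Type*} [Fintype ι] [DecidableEq ι]
    (M : Matrix (Fin m) ι 𝕜) (s : ℕ) : Prop :=
  ∀ v : ι → 𝕜, M.mulVec v = 0 → v ≠ 0 →
    ∀ T : Finset ι, T.card ≤ s → norm1 (restr T v) < norm1 (restr Tᶜ v)

/-- `D`-null space property of order `s`. -/
def DNSP [RCLike 𝕜] {m d : ℕ} {ι : Type*} [Fintype ι] [DecidableEq ι]
    (A : Matrix (Fin m) (Fin d) 𝕜) (D : Matrix (Fin d) ι 𝕜) (s : ℕ) : Prop :=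
  ∀ T : Finset ι, T.card ≤ s →
    ∀ v : ι → 𝕜, A.mulVec (D.mulVec v) = 0 → D.mulVec v ≠ 0 →
      ∃ u : ι → 𝕜, D.mulVec u = 0 ∧ norm1 (restr T v + u) < norm1 (restr Tᶜ v)

/-- Strong `D`-null space property of order `s` with constant `c`. -/
def SNSPc [RCLike 𝕜] {m d : ℕ} {ι : Type*} [Fintype ι] [DecidableEq ι]
    (A : Matrix (Fin m) (Fin d) 𝕜) (D : Matrix (Fin d) ι 𝕜) (s : ℕ) (c : ℝ) : Prop :=
  ∀ v : ι → 𝕜, A.mulVec (D.mulVec v) = 0 →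
    ∀ T : Finset ι, T.card ≤ s →
      ∃ u : ι → 𝕜, D.mulVec u = 0 ∧
        c * norm2 (D.mulVec v) ≤ norm1 (restr Tᶜ v) - norm1 (restr T v + u)

/-- Smallest positive singular value of a matrix: the infimum of the set of positive `σ`
such that `σ²` is an eigenvalue of `Mᴴ M`. -/
noncomputable def nuSV [RCLike 𝕜] {κ ι : Type*} [Fintype κ] [Fintype ι]
    (M : Matrix κ ι 𝕜) : ℝ :=
  sInf {σ : ℝ | 0 < σ ∧ ∃ v : ι → 𝕜, v ≠ 0 ∧ (M.conjTranspose * M).mulVec v = ((σ : 𝕜) ^ 2) • v}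

/-- ℓ¹ error of the best `s`-term approximation. -/
noncomputable def sigmaS [RCLike 𝕜] {ι : Type*} [Fintype ι] (s : ℕ) (x : ι → 𝕜) : ℝ :=
  sInf {r : ℝ | ∃ v : ι → 𝕜, sparse s v ∧ r = norm1 (x - v)}

/-- Spectral norm (ℓ² → ℓ² operator norm). -/
noncomputable def specNorm [RCLike 𝕜] {m d : ℕ} (A : Matrix (Fin m) (Fin d) 𝕜) : ℝ :=
  sSup {r : ℝ | ∃ x : Fin d → 𝕜, norm2 x ≤ 1 ∧ r = norm2 (A.mulVec x)}

/-- ℓ¹ → ℓ² operator norm: the maximal ℓ² norm of a column. -/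
noncomputable def norm12 [RCLike 𝕜] {d : ℕ} {ι : Type*} [Fintype ι]
    (M : Matrix (Fin d) ι 𝕜) : ℝ :=
  sSup {r : ℝ | ∃ j : ι, r = norm2 (fun i => M i j)}

end Defs

/-! The reverse implication is immediate. For the forward one fix `T` and let
`G v = sup_{u ∈ ker D} (‖v_{Tᶜ}‖₁ - ‖v_T + u‖₁)`, a continuous, positively homogeneous function that
the `D`-null space property makes positive on `ker (A D) \ ker D`. We find `c > 0` with
`c ‖D v‖₂ ≤ G v` on a subspace `N` by induction on `dim N`. By homogeneity and compactness of the
unit sphere of `N` it suffices to find such a `c` near each unit vector `vb ∈ N`. If `D vb ≠ 0`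
this is continuity. If `D vb = 0`, every `v` near `vb` has the signs of `vb` on the support of `vb`.
Subtracting the largest multiple `t • vb` that keeps these signs leaves `D v` unchanged, does not
increase `G` since no coordinate cancels, and lands in a hyperplane `N ∩ {x | x i = 0}` of `N`,
where the induction hypothesis applies. -/

open Filter Topology Matrix

section Norms
variable {ι : Type*} [Fintype ι]

lemma norm1_eq_norm_toLp (x : ι → ℝ) : norm1 x = ‖WithLp.toLp 1 x‖ := by
  simp [norm1, PiLp.norm_eq_of_L1]

lemma norm1_nonneg (x : ι → ℝ) : 0 ≤ norm1 x := by
  rw [norm1_eq_norm_toLp]; exact norm_nonneg _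

lemma norm1_add_le (x y : ι → ℝ) : norm1 (x + y) ≤ norm1 x + norm1 y := by
  simpa only [norm1_eq_norm_toLp, WithLp.toLp_add] using norm_add_le _ _

lemma norm1_neg (x : ι → ℝ) : norm1 (-x) = norm1 x := by
  simp only [norm1_eq_norm_toLp, WithLp.toLp_neg, norm_neg]

lemma norm1_smul (c : ℝ) (x : ι → ℝ) : norm1 (c • x) = |c| * norm1 x := by
  simp only [norm1_eq_norm_toLp, WithLp.toLp_smul, norm_smul, Real.norm_eq_abs]

lemma continuous_norm1 : Continuous (norm1 : (ι → ℝ) → ℝ) := by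
  simpa only [funext norm1_eq_norm_toLp] using (PiLp.continuous_toLp 1 _).norm

lemma norm_le_norm1 (x : ι → ℝ) : ‖x‖ ≤ norm1 x :=
  (pi_norm_le_iff_of_nonneg (norm1_nonneg x)).2 fun i =>
    Finset.single_le_sum (fun j _ => norm_nonneg (x j)) (Finset.mem_univ i)

end Norms

section Restr
variable {ι : Type*} [DecidableEq ι]

lemma restr_add (T : Finset ι) (x y : ι → ℝ) : restr T (x + y) = restr T x + restr T y := by
  ext i; by_cases h : i ∈ T <;> simp [restr, h]

lemma restr_smul (T : Finset ι) (c : ℝ) (x : ι → ℝ) : restr T (c • x) = c • restr T x := by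
  ext i; by_cases h : i ∈ T <;> simp [restr, h]

lemma restr_add_restr_compl [Fintype ι] (T : Finset ι) (x : ι → ℝ) :
    restr T x + restr Tᶜ x = x := by
  ext i; by_cases h : i ∈ T <;> simp [restr, h]

lemma continuous_restr (T : Finset ι) : Continuous (restr T : (ι → ℝ) → ι → ℝ) :=
  continuous_pi fun i => by unfold restr; split_ifs <;> fun_prop

lemma norm1_restr_add [Fintype ι] {T : Finset ι} {x y : ι → ℝ}
    (h : ∀ i, |x i + y i| = |x i| + |y i|) :
    norm1 (restr T (x + y)) = norm1 (restr T x) + norm1 (restr T y) := by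
  simp only [norm1, ← Finset.sum_add_distrib]
  refine Finset.sum_congr rfl fun i _ => ?_
  by_cases hi : i ∈ T <;> simp [restr, hi, h i]

end Restr

section L1InfDist
variable {ι : Type*} [Fintype ι]

noncomputable def l1InfDist (x : ι → ℝ) (W : Submodule ℝ (ι → ℝ)) : ℝ :=
  ⨅ u : W, norm1 (x + (u : ι → ℝ))

variable {W : Submodule ℝ (ι → ℝ)}

lemma l1InfDist_le (x : ι → ℝ) {u : ι → ℝ} (hu : u ∈ W) : l1InfDist x W ≤ norm1 (x + u) :=
  ciInf_le ⟨0, Set.forall_mem_range.2 fun _ => norm1_nonneg _⟩ (⟨u, hu⟩ : W)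

lemma exists_norm1_add_eq_l1InfDist (x : ι → ℝ) (W : Submodule ℝ (ι → ℝ)) :
    ∃ u ∈ W, norm1 (x + u) = l1InfDist x W := by
  have hcoercive : ∀ᶠ u : W in cocompact W, norm1 (x + 0) ≤ norm1 (x + (u : ι → ℝ)) := by
    rw [← Metric.cobounded_eq_cocompact, ← comap_norm_atTop]
    filter_upwards [(eventually_ge_atTop (2 * norm1 x)).comap norm] with u hu
    have htri := norm1_add_le (x + (u : ι → ℝ)) (-x)
    rw [add_neg_cancel_comm, norm1_neg] at htri
    have hsup : ‖u‖ ≤ norm1 (u : ι → ℝ) := norm_le_norm1 _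
    rw [add_zero]
    linarith
  obtain ⟨u, hu⟩ :=
    (continuous_norm1.comp (continuous_const.add continuous_subtype_val)).exists_forall_le' 0
      hcoercive
  exact ⟨u, u.2, le_antisymm (le_ciInf hu) (l1InfDist_le x u.2)⟩

lemma l1InfDist_add_le (x y : ι → ℝ) : l1InfDist (x + y) W ≤ l1InfDist x W + norm1 y := by
  obtain ⟨u, hu, hxu⟩ := exists_norm1_add_eq_l1InfDist x W
  calc l1InfDist (x + y) W ≤ norm1 (x + u + y) := by
        simpa only [add_right_comm] using l1InfDist_le (x + y) hu
    _ ≤ l1InfDist x W + norm1 y := hxu ▸ norm1_add_le _ _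

lemma l1InfDist_add_mem (x : ι → ℝ) {w : ι → ℝ} (hw : w ∈ W) :
    l1InfDist (x + w) W = l1InfDist x W := by
  have key : ∀ x w, w ∈ W → l1InfDist (x + w) W ≤ l1InfDist x W := fun x w hw => by
    obtain ⟨u, hu, hxu⟩ := exists_norm1_add_eq_l1InfDist x W
    have := l1InfDist_le (x + w) (W.sub_mem hu hw)
    rwa [add_add_sub_cancel, hxu] at this
  refine le_antisymm (key x w hw) ?_
  simpa only [add_neg_cancel_right] using key (x + w) (-w) (W.neg_mem hw)

lemma l1InfDist_smul (c : ℝ) (x : ι → ℝ) : l1InfDist (c • x) W = |c| * l1InfDist x W := by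
  have key : ∀ (c : ℝ) x, l1InfDist (c • x) W ≤ |c| * l1InfDist x W := fun c x => by
    obtain ⟨u, hu, hxu⟩ := exists_norm1_add_eq_l1InfDist x W
    simpa only [← smul_add, norm1_smul, hxu] using l1InfDist_le (c • x) (W.smul_mem c hu)
  refine le_antisymm (key c x) ?_
  rcases eq_or_ne c 0 with rfl | hc
  · simp only [abs_zero, zero_mul, zero_smul]
    exact Real.iInf_nonneg fun _ => norm1_nonneg _
  · have := key c⁻¹ (c • x)
    rwa [inv_smul_smul₀ hc, abs_inv, le_inv_mul_iff₀ (abs_pos.2 hc)] at this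

lemma l1InfDist_sub_le (x y : ι → ℝ) : l1InfDist x W - l1InfDist y W ≤ norm1 (x - y) := by
  simpa only [add_sub_cancel, sub_le_iff_le_add'] using l1InfDist_add_le (W := W) y (x - y)

lemma continuous_l1InfDist : Continuous fun x : ι → ℝ => l1InfDist x W := by
  refine continuous_iff_continuousAt.2 fun x => tendsto_iff_dist_tendsto_zero.2 ?_
  have hlim : Tendsto (fun y => norm1 (y - x)) (𝓝 x) (𝓝 0) := by
    have := ((continuous_norm1.comp (continuous_id.sub (continuous_const (y := x)))).tendsto x)
    simpa only [Function.comp_def, Pi.sub_apply, id, sub_self, norm1, norm_zero,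
      Finset.sum_const_zero] using this
  refine squeeze_zero (fun _ => dist_nonneg) (fun y => abs_sub_le_iff.2 ⟨?_, ?_⟩) hlim
  · exact l1InfDist_sub_le y x
  · simpa only [← neg_sub y x, norm1_neg] using l1InfDist_sub_le x y

end L1InfDist

section NspMargin
variable {ι : Type*} [Fintype ι] [DecidableEq ι] (T : Finset ι) (W : Submodule ℝ (ι → ℝ))

/-- `sup_{u ∈ W} (‖v_{Tᶜ}‖₁ - ‖v_T + u‖₁)` -/
noncomputable def nspMargin (v : ι → ℝ) : ℝ :=
  norm1 (restr Tᶜ v) - l1InfDist (restr T v) W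

lemma nspMargin_smul {c : ℝ} (hc : 0 ≤ c) (v : ι → ℝ) :
    nspMargin T W (c • v) = c * nspMargin T W v := by
  simp only [nspMargin, restr_smul, norm1_smul, l1InfDist_smul, abs_of_nonneg hc, mul_sub]

lemma continuous_nspMargin : Continuous (nspMargin T W) :=
  (continuous_norm1.comp (continuous_restr Tᶜ)).sub (continuous_l1InfDist.comp (continuous_restr T))

variable {T W}

lemma nspMargin_sub_le {v w : ι → ℝ} (hw : w ∈ W) (h : ∀ i, |v i| = |w i| + |v i - w i|) :
    nspMargin T W (v - w) ≤ nspMargin T W v := by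
  have hcompl : norm1 (restr Tᶜ v) = norm1 (restr Tᶜ w) + norm1 (restr Tᶜ (v - w)) := by
    simpa only [add_sub_cancel] using norm1_restr_add (T := Tᶜ) (x := w) (y := v - w)
      (by simpa only [Pi.sub_apply, add_sub_cancel] using h)
  have hsplit : restr T v = restr T (v - w) + -restr Tᶜ w + w := by
    have := restr_add T (v - w) w
    rw [sub_add_cancel] at this
    linear_combination this + restr_add_restr_compl T w
  have hdist : l1InfDist (restr T v) W ≤ l1InfDist (restr T (v - w)) W + norm1 (restr Tᶜ w) := by
    rw [hsplit, l1InfDist_add_mem _ hw, ← norm1_neg (restr Tᶜ w)]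
    exact l1InfDist_add_le _ _
  simp only [nspMargin]
  linarith

end NspMargin

section LocalToGlobal

lemma IsCompact.exists_pos_mul_le {X : Type*} [TopologicalSpace X] {K : Set X} (hK : IsCompact K)
    {f g : X → ℝ} (hg : ∀ x, 0 ≤ g x)
    (hloc : ∀ x ∈ K, ∃ c > 0, ∀ᶠ y in 𝓝[K] x, c * g y ≤ f y) :
    ∃ c > 0, ∀ y ∈ K, c * g y ≤ f y := by
  refine hK.induction_on (p := fun s => ∃ c > 0, ∀ y ∈ s, c * g y ≤ f y)
    ⟨1, one_pos, by simp⟩ ?_ ?_ fun x hx => ?_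
  · rintro s t hst ⟨c, hc, h⟩
    exact ⟨c, hc, fun y hy => h y (hst hy)⟩
  · rintro s t ⟨c, hc, hs⟩ ⟨c', hc', ht⟩
    refine ⟨min c c', lt_min hc hc', fun y hy => ?_⟩
    rcases hy with hy | hy
    · exact (mul_le_mul_of_nonneg_right (min_le_left c c') (hg y)).trans (hs y hy)
    · exact (mul_le_mul_of_nonneg_right (min_le_right c c') (hg y)).trans (ht y hy)
  · obtain ⟨c, hc, h⟩ := hloc x hx
    exact ⟨_, h, c, hc, fun y hy => hy⟩

lemma exists_pos_eventually_mul_le {X : Type*} [TopologicalSpace X] {f g : X → ℝ} {x : X}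
    (hf : ContinuousAt f x) (hg : ContinuousAt g x) (hfx : 0 < f x) :
    ∃ c > 0, ∀ᶠ y in 𝓝 x, c * g y ≤ f y := by
  have hbound : 0 < |g x| + 1 := by positivity
  refine ⟨f x / 2 / (|g x| + 1), by positivity, ?_⟩
  filter_upwards [continuousAt_const.eventually_lt hf (half_lt_self hfx),
    hg.eventually_lt continuousAt_const ((le_abs_self (g x)).trans_lt (lt_add_one _))]
    with y hfy hgy
  calc f x / 2 / (|g x| + 1) * g y ≤ f x / 2 / (|g x| + 1) * (|g x| + 1) :=
        mul_le_mul_of_nonneg_left hgy.le (by positivity)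
    _ = f x / 2 := div_mul_cancel₀ _ hbound.ne'
    _ ≤ f y := hfy.le

lemma Submodule.forall_mul_le_of_forall_norm_eq_one {E : Type*} [NormedAddCommGroup E]
    [NormedSpace ℝ E] (N : Submodule ℝ E) {f g : E → ℝ}
    (hf : ∀ c : ℝ, 0 ≤ c → ∀ x, f (c • x) = c * f x)
    (hg : ∀ c : ℝ, 0 ≤ c → ∀ x, g (c • x) = c * g x)
    {c : ℝ} (h : ∀ x ∈ N, ‖x‖ = 1 → c * g x ≤ f x) : ∀ x ∈ N, c * g x ≤ f x := by
  intro x hx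
  rcases eq_or_ne x 0 with rfl | hx0
  · rw [← zero_smul ℝ (0 : E), hf 0 le_rfl, hg 0 le_rfl]
    simp
  · have hn : 0 < ‖x‖ := norm_pos_iff.2 hx0
    have := h (‖x‖⁻¹ • x) (N.smul_mem _ hx) (by rw [norm_smul, norm_inv, norm_norm,
      inv_mul_cancel₀ hn.ne'])
    rw [hf _ (inv_nonneg.2 hn.le), hg _ (inv_nonneg.2 hn.le), mul_left_comm] at this
    exact le_of_mul_le_mul_left this (inv_pos.2 hn)

end LocalToGlobal

section Norm2
variable {κ : Type*} [Fintype κ]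

lemma norm2_eq_norm_toLp (x : κ → ℝ) : norm2 x = ‖(WithLp.toLp 2 x : EuclideanSpace ℝ κ)‖ := by
  rw [EuclideanSpace.norm_eq]; rfl

lemma norm2_nonneg (x : κ → ℝ) : 0 ≤ norm2 x := Real.sqrt_nonneg _

lemma norm2_pos {x : κ → ℝ} (hx : x ≠ 0) : 0 < norm2 x := by
  simpa [norm2_eq_norm_toLp] using hx

variable {ι : Type*} [Fintype ι] (D : Matrix κ ι ℝ)

lemma norm2_mulVec_smul {c : ℝ} (hc : 0 ≤ c) (v : ι → ℝ) :
    norm2 (D *ᵥ (c • v)) = c * norm2 (D *ᵥ v) := by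
  simp only [norm2_eq_norm_toLp, Matrix.mulVec_smul, WithLp.toLp_smul, norm_smul,
    Real.norm_of_nonneg hc]

lemma continuous_norm2_mulVec : Continuous fun v : ι → ℝ => norm2 (D *ᵥ v) := by
  simp only [norm2_eq_norm_toLp]
  exact ((PiLp.continuous_toLp 2 _).comp D.mulVecLin.continuous_of_finiteDimensional).norm

end Norm2

/-- The witness `t` is the least ratio `v i / vb i` over the support of `vb`. -/
lemma exists_conformal_sub_smul {ι : Type*} [Fintype ι] {v vb : ι → ℝ} (hvb : vb ≠ 0)
    (hv : ∀ i, vb i ≠ 0 → 0 < v i / vb i) :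
    ∃ t : ℝ, ∃ i, vb i ≠ 0 ∧ v i = t * vb i ∧ ∀ j, |v j| = |t * vb j| + |v j - t * vb j| := by
  classical
  set S := Finset.univ.filter fun i => vb i ≠ 0
  have hS : S.Nonempty := by
    obtain ⟨i, hi⟩ := Function.ne_iff.1 hvb
    exact ⟨i, by simpa [S] using hi⟩
  obtain ⟨i, hiS, hmin⟩ := S.exists_min_image (fun i => v i / vb i) hS
  have hi : vb i ≠ 0 := (Finset.mem_filter.1 hiS).2
  refine ⟨v i / vb i, i, hi, (div_mul_cancel₀ _ hi).symm, fun j => ?_⟩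
  by_cases hj : vb j = 0
  · simp [hj]
  have hle : v i / vb i ≤ v j / vb j := hmin j (by simp [S, hj])
  rw [show v j = v j / vb j * vb j from (div_mul_cancel₀ _ hj).symm, ← sub_mul, abs_mul, abs_mul,
    abs_mul, abs_of_pos (hv i hi), abs_of_pos (hv j hj), abs_of_nonneg (sub_nonneg.2 hle)]
  ring

section Induction
variable {ι κ : Type*} [Fintype ι] [DecidableEq ι] [Fintype κ] (T : Finset ι) (D : Matrix κ ι ℝ)

lemma exists_pos_eventually_mul_le_nspMargin_of_mulVec_eq_zero {N : Submodule ℝ (ι → ℝ)}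
    {vb : ι → ℝ} (hvbN : vb ∈ N) (hvb : D *ᵥ vb = 0) (hvb0 : vb ≠ 0)
    (hslice : ∀ i, vb i ≠ 0 → ∃ c > 0, ∀ y ∈ N ⊓ LinearMap.ker (LinearMap.proj i),
      c * norm2 (D *ᵥ y) ≤ nspMargin T (LinearMap.ker D.mulVecLin) y) :
    ∃ c > 0, ∀ᶠ v in 𝓝 vb, v ∈ N →
      c * norm2 (D *ᵥ v) ≤ nspMargin T (LinearMap.ker D.mulVecLin) v := by
  classical
  choose! c hc hcle using hslice
  set S := Finset.univ.filter fun i => vb i ≠ 0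
  have hS : S.Nonempty := by
    obtain ⟨i, hi⟩ := Function.ne_iff.1 hvb0
    exact ⟨i, by simpa [S] using hi⟩
  refine ⟨S.inf' hS c, (Finset.lt_inf'_iff hS).2 fun i hi => hc i (Finset.mem_filter.1 hi).2, ?_⟩
  have hsign : ∀ᶠ v in 𝓝 vb, ∀ i ∈ S, 0 < v i / vb i :=
    (Finset.eventually_all S).2 fun i hi => continuousAt_const.eventually_lt
      ((continuous_apply i).div_const _).continuousAt
      (by simp [div_self (Finset.mem_filter.1 hi).2])
  filter_upwards [hsign] with v hv hvN
  obtain ⟨t, i, hi, hvi, hsplit⟩ :=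
    exists_conformal_sub_smul hvb0 fun i hi => hv i (by simp [S, hi])
  have hy : v - t • vb ∈ N ⊓ LinearMap.ker (LinearMap.proj i) :=
    ⟨N.sub_mem hvN (N.smul_mem t hvbN), by simp [hvi]⟩
  have hDy : D *ᵥ (v - t • vb) = D *ᵥ v := by
    rw [Matrix.mulVec_sub, Matrix.mulVec_smul, hvb, smul_zero, sub_zero]
  calc S.inf' hS c * norm2 (D *ᵥ v) ≤ c i * norm2 (D *ᵥ (v - t • vb)) :=
        hDy ▸ mul_le_mul_of_nonneg_right (Finset.inf'_le _ (by simp [S, hi])) (norm2_nonneg _)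
    _ ≤ nspMargin T (LinearMap.ker D.mulVecLin) (v - t • vb) := hcle i hi _ hy
    _ ≤ nspMargin T (LinearMap.ker D.mulVecLin) v :=
        nspMargin_sub_le (by simp [hvb]) (by simpa using hsplit)

theorem exists_pos_mul_norm2_le_nspMargin (N : Submodule ℝ (ι → ℝ))
    (hpos : ∀ v ∈ N, D *ᵥ v ≠ 0 → 0 < nspMargin T (LinearMap.ker D.mulVecLin) v) :
    ∃ c > 0, ∀ v ∈ N, c * norm2 (D *ᵥ v) ≤ nspMargin T (LinearMap.ker D.mulVecLin) v := by
  induction hr : Module.finrank ℝ N using Nat.strong_induction_on generalizing N with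
  | _ r ih =>
  set K := (N : Set (ι → ℝ)) ∩ Metric.sphere 0 1
  have hlocal : ∀ vb ∈ K, ∃ c > 0, ∀ᶠ v in 𝓝[K] vb,
      c * norm2 (D *ᵥ v) ≤ nspMargin T (LinearMap.ker D.mulVecLin) v := by
    rintro vb ⟨hvbN, hvb1⟩
    by_cases hDvb : D *ᵥ vb = 0
    · have hvb0 : vb ≠ 0 := by rintro rfl; simp at hvb1
      have hslice : ∀ i, vb i ≠ 0 → N ⊓ LinearMap.ker (LinearMap.proj i) < N := fun i hi =>
        SetLike.lt_iff_le_and_exists.2 ⟨inf_le_left, vb, hvbN, fun h => hi h.2⟩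
      obtain ⟨c, hc, h⟩ := exists_pos_eventually_mul_le_nspMargin_of_mulVec_eq_zero T D hvbN hDvb
        hvb0 fun i hi => ih _ (hr ▸ Submodule.finrank_lt_finrank_of_lt (hslice i hi)) _
          (fun v hv => hpos v hv.1) rfl
      exact ⟨c, hc, eventually_nhdsWithin_iff.2 (h.mono fun v hv hvK => hv hvK.1)⟩
    · obtain ⟨c, hc, h⟩ := exists_pos_eventually_mul_le (continuous_nspMargin _ _).continuousAt
        (continuous_norm2_mulVec D).continuousAt (hpos vb hvbN hDvb)
      exact ⟨c, hc, eventually_nhdsWithin_of_eventually_nhds h⟩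
  have hK : IsCompact K := (isCompact_sphere 0 1).inter_left N.closed_of_finiteDimensional
  obtain ⟨c, hc, hle⟩ := hK.exists_pos_mul_le (fun v => norm2_nonneg _) hlocal
  exact ⟨c, hc, N.forall_mul_le_of_forall_norm_eq_one (fun _ => nspMargin_smul T _)
    (fun _ => norm2_mulVec_smul D) fun v hv hv1 => hle v ⟨hv, by simpa using hv1⟩⟩

end Induction

theorem stmt7_general {m d n s : ℕ}
    (A : Matrix (Fin m) (Fin d) ℝ) (D : Matrix (Fin d) (Fin n) ℝ) :
    DNSP A D s ↔ ∃ c : ℝ, 0 < c ∧ SNSPc A D s c := by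
  set W := LinearMap.ker D.mulVecLin
  set N := LinearMap.ker (A.mulVecLin ∘ₗ D.mulVecLin)
  constructor
  · intro h
    have hT : ∀ T : Finset (Fin n), ∀ᶠ c in 𝓝[>] (0 : ℝ),
        T.card ≤ s → ∀ v ∈ N, c * norm2 (D *ᵥ v) ≤ nspMargin T W v := by
      intro T
      by_cases hTs : T.card ≤ s
      · obtain ⟨c, hc, hle⟩ := exists_pos_mul_norm2_le_nspMargin T D N fun v hv hDv => by
          obtain ⟨u, hu, hlt⟩ := h T hTs v (by simpa [N] using hv) hDv
          exact sub_pos.2 ((l1InfDist_le _ (by simpa [W] using hu)).trans_lt hlt)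
        filter_upwards [Ioc_mem_nhdsGT hc] with c' hc' _ v hv
        exact (mul_le_mul_of_nonneg_right hc'.2 (norm2_nonneg _)).trans (hle v hv)
      · exact Eventually.of_forall fun _ h => absurd h hTs
    obtain ⟨c, hcT, hc⟩ := ((eventually_all.2 hT).and self_mem_nhdsWithin).exists
    refine ⟨c, hc, fun v hv T hTs => ?_⟩
    obtain ⟨u, hu, hu_eq⟩ := exists_norm1_add_eq_l1InfDist (restr T v) W
    exact ⟨u, by simpa [W] using hu, hu_eq ▸ hcT T hTs v (by simpa [N] using hv)⟩
  · rintro ⟨c, hc, h⟩ T hTs v hv hDv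
    obtain ⟨u, hu, hle⟩ := h v hv T hTs
    exact ⟨u, hu, by nlinarith [norm2_pos hDv]⟩

/-- in the real case, the `D`-null space property is equivalent to the
strong `D`-null space property of the same order. -/
theorem stmt7 {m d n s : ℕ}
    (A : Matrix (Fin m) (Fin d) ℝ) (D : Matrix (Fin d) (Fin n) ℝ)
    (hD : Function.Surjective D.mulVec) :
    DNSP A D s ↔ ∃ c : ℝ, 0 < c ∧ SNSPc A D s c :=
  stmt7_general A D
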